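/- Let π be a permutation of the dyadic intervals with |π(I)| = |I| for all I. If the operator T_π h_I = h_{π(I)} is bounded on dyadic BMO with norm C, then K = sup_{B⊆D} |(π⁻¹(B))*| / |B*| ≤ 2C² (i.e. K is finite and controlled by the BMO-norm of T_π). -/

import Mathlib

open MeasureTheory ENNReal
open scoped Classical

/-- A dyadic subinterval of `[0,1]`: `[k/2^n, (k+1)/2^n)`. -/
structure DyadicI where
  n : ℕ
  k : ℕ
  hk : k < 2 ^ n

namespace DyadicI

/-- The underlying set of a dyadic interval. -/
noncomputable def toSet (I : DyadicI) : Set ℝ :=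
  Set.Ico ((I.k : ℝ) / 2 ^ I.n) ((I.k + 1 : ℝ) / 2 ^ I.n)

/-- The length `|I| = 2^{-n}`. -/
noncomputable def len (I : DyadicI) : ℝ≥0∞ := (2 ^ I.n : ℝ≥0∞)⁻¹

/-- Containment of dyadic intervals. -/
def le (J I : DyadicI) : Prop := J.toSet ⊆ I.toSet

/-- The measure of the pointset covered by a collection of dyadic intervals. -/
noncomputable def star (B : Set DyadicI) : ℝ≥0∞ :=
  volume (⋃ I ∈ B, I.toSet)

/-- The Carleson constant of a collection of dyadic intervals. -/
noncomputable def carleson (B : Set DyadicI) : ℝ≥0∞ :=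
  ⨆ I : DyadicI, (len I)⁻¹ * ∑' J : {J : DyadicI // J ∈ B ∧ le J I}, len (J : DyadicI)

/-- Maximal intervals of a collection. -/
def maxB (B : Set DyadicI) : Set DyadicI :=
  {I | I ∈ B ∧ ∀ J ∈ B, le I J → J = I}

/-- Squared dyadic BMO norm of a coefficient family, sup over collections. -/
noncomputable def bmoSq (x : DyadicI → ℝ) : ℝ≥0∞ :=
  ⨆ B : Set DyadicI,
    (star B)⁻¹ * ∑' I : B, ENNReal.ofReal (x I ^ 2) * len (I : DyadicI)

/-- Squared dyadic BMO norm of a coefficient family, sup over dyadic intervals. -/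
noncomputable def bmoSq' (x : DyadicI → ℝ) : ℝ≥0∞ :=
  ⨆ I : DyadicI,
    (len I)⁻¹ * ∑' J : {J : DyadicI // le J I}, ENNReal.ofReal (x J ^ 2) * len (J : DyadicI)

end DyadicI

open DyadicI

namespace DyadicI

instance : Countable DyadicI := by
  have h : Function.Injective (fun I : DyadicI => (I.n, I.k)) := by
    rintro ⟨n, k, h1⟩ ⟨n', k', h2⟩ he
    simp only [Prod.mk.injEq] at he
    obtain ⟨rfl, rfl⟩ := he
    rfl
  exact h.countable

lemma volume_toSet (I : DyadicI) : volume I.toSet = len I := by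
  rw [toSet, Real.volume_Ico, len]
  have h : ((I.k : ℝ) + 1) / 2 ^ I.n - I.k / 2 ^ I.n = ((2 : ℝ) ^ I.n)⁻¹ := by
    field_simp
    ring
  rw [h, ENNReal.ofReal_inv_of_pos (by positivity)]
  congr 1
  rw [ENNReal.ofReal_pow (by norm_num)]
  norm_num

lemma len_ne_zero (I : DyadicI) : len I ≠ 0 := by
  simp [len, ENNReal.pow_ne_top]

lemma mem_toSet {I : DyadicI} {x : ℝ} :
    x ∈ I.toSet ↔ (I.k : ℝ) / 2 ^ I.n ≤ x ∧ x < ((I.k : ℝ) + 1) / 2 ^ I.n := Set.mem_Ico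

lemma left_mem (I : DyadicI) : ((I.k : ℝ) / 2 ^ I.n) ∈ I.toSet := by
  refine ⟨le_rfl, ?_⟩
  exact (div_lt_div_iff_of_pos_right (by positivity)).2 (by linarith)

lemma toSet_subset_Ico (I : DyadicI) : I.toSet ⊆ Set.Ico (0 : ℝ) 1 := by
  intro x hx
  obtain ⟨h1, h2⟩ := mem_toSet.1 hx
  constructor
  · have : (0 : ℝ) ≤ (I.k : ℝ) / 2 ^ I.n := by positivity
    linarith
  · have hk : (I.k : ℝ) + 1 ≤ 2 ^ I.n := by
      have := I.hk
      have : ((I.k + 1 : ℕ) : ℝ) ≤ ((2 ^ I.n : ℕ) : ℝ) := by exact_mod_cast this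
      push_cast at this
      linarith
    have : ((I.k : ℝ) + 1) / 2 ^ I.n ≤ 1 := by
      rw [div_le_one (by positivity)]
      exact hk
    linarith

lemma star_le_one (S : Set DyadicI) : star S ≤ 1 := by
  have h : (⋃ I ∈ S, toSet I) ⊆ Set.Ico (0 : ℝ) 1 := by
    exact Set.iUnion₂_subset fun I _ => toSet_subset_Ico I
  calc star S ≤ volume (Set.Ico (0 : ℝ) 1) := measure_mono h
    _ = 1 := by simp

lemma star_ne_top (S : Set DyadicI) : star S ≠ ⊤ :=
  ne_top_of_le_ne_top one_ne_top (star_le_one S)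

lemma star_mono {S T : Set DyadicI} (h : S ⊆ T) : star S ≤ star T :=
  measure_mono (Set.biUnion_subset_biUnion_left h)

lemma len_le_star {S : Set DyadicI} {I : DyadicI} (hI : I ∈ S) : len I ≤ star S := by
  rw [← volume_toSet]
  exact measure_mono (Set.subset_biUnion_of_mem hI)

-- key nat inequalities from a common point
lemma nat_bounds {I J : DyadicI} (hn : J.n ≤ I.n) {x : ℝ} (hI : x ∈ I.toSet) (hJ : x ∈ J.toSet) :
    J.k * 2 ^ (I.n - J.n) ≤ I.k ∧ I.k + 1 ≤ (J.k + 1) * 2 ^ (I.n - J.n) := by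
  have hd : I.n = J.n + (I.n - J.n) := (Nat.add_sub_cancel' hn).symm
  set d := I.n - J.n with hdd
  have key : ∀ a : ℕ, (a : ℝ) / 2 ^ J.n = ((a * 2 ^ d : ℕ) : ℝ) / 2 ^ I.n := by
    intro a
    rw [hd]
    push_cast
    rw [pow_add]
    field_simp
  have hpos : (0 : ℝ) < 2 ^ I.n := by positivity
  obtain ⟨hI1, hI2⟩ := mem_toSet.1 hI
  obtain ⟨hJ1, hJ2⟩ := mem_toSet.1 hJ
  constructor
  · -- J.k * 2^d ≤ I.k
    have h1 : ((J.k * 2 ^ d : ℕ) : ℝ) / 2 ^ I.n < ((I.k : ℝ) + 1) / 2 ^ I.n := by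
      calc ((J.k * 2 ^ d : ℕ) : ℝ) / 2 ^ I.n = (J.k : ℝ) / 2 ^ J.n := (key J.k).symm
        _ ≤ x := hJ1
        _ < _ := hI2
    have h2 : ((J.k * 2 ^ d : ℕ) : ℝ) < (I.k : ℝ) + 1 := by
      exact (div_lt_div_iff_of_pos_right hpos).1 h1
    have : (J.k * 2 ^ d : ℕ) < I.k + 1 := by exact_mod_cast h2
    omega
  · -- I.k + 1 ≤ (J.k+1) * 2^d
    have h1 : (I.k : ℝ) / 2 ^ I.n < (((J.k + 1) * 2 ^ d : ℕ) : ℝ) / 2 ^ I.n := by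
      calc (I.k : ℝ) / 2 ^ I.n ≤ x := hI1
        _ < ((J.k : ℝ) + 1) / 2 ^ J.n := hJ2
        _ = (((J.k + 1) * 2 ^ d : ℕ) : ℝ) / 2 ^ I.n := by
            have := key (J.k + 1); push_cast at this ⊢; linarith [this]
    have h2 : (I.k : ℝ) < (((J.k + 1) * 2 ^ d : ℕ) : ℝ) := by
      exact (div_lt_div_iff_of_pos_right hpos).1 h1
    have : I.k < (J.k + 1) * 2 ^ d := by exact_mod_cast h2
    omega

lemma subset_of_nat {I J : DyadicI} (hn : J.n ≤ I.n)
    (h1 : J.k * 2 ^ (I.n - J.n) ≤ I.k) (h2 : I.k + 1 ≤ (J.k + 1) * 2 ^ (I.n - J.n)) :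
    I.toSet ⊆ J.toSet := by
  have hd : I.n = J.n + (I.n - J.n) := (Nat.add_sub_cancel' hn).symm
  set d := I.n - J.n with hdd
  have key : ∀ a : ℕ, (a : ℝ) / 2 ^ J.n = ((a * 2 ^ d : ℕ) : ℝ) / 2 ^ I.n := by
    intro a
    rw [hd]
    push_cast
    rw [pow_add]
    field_simp
  intro y hy
  obtain ⟨hy1, hy2⟩ := mem_toSet.1 hy
  have hpos : (0 : ℝ) < 2 ^ I.n := by positivity
  constructor
  · calc (J.k : ℝ) / 2 ^ J.n = ((J.k * 2 ^ d : ℕ) : ℝ) / 2 ^ I.n := key J.k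
      _ ≤ (I.k : ℝ) / 2 ^ I.n := by gcongr
      _ ≤ y := hy1
  · calc y < ((I.k : ℝ) + 1) / 2 ^ I.n := hy2
      _ ≤ (((J.k + 1) * 2 ^ d : ℕ) : ℝ) / 2 ^ I.n := by
          gcongr
          have : ((I.k + 1 : ℕ) : ℝ) ≤ (((J.k + 1) * 2 ^ d : ℕ) : ℝ) := by exact_mod_cast h2
          push_cast at this ⊢
          linarith
      _ = ((J.k : ℝ) + 1) / 2 ^ J.n := by
          have := key (J.k + 1); push_cast at this ⊢; linarith [this]

lemma n_eq_of_toSet_eq {I J : DyadicI} (h : I.toSet = J.toSet) : I.n = J.n := by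
  have hv : len I = len J := by rw [← volume_toSet, ← volume_toSet, h]
  have h2 : (2 : ℝ≥0∞) ^ I.n = 2 ^ J.n := by
    have := congrArg Inv.inv hv
    simpa [len] using this
  have h3 : ((2 ^ I.n : ℕ) : ℝ≥0∞) = ((2 ^ J.n : ℕ) : ℝ≥0∞) := by push_cast; exact h2
  have h4 : (2 : ℕ) ^ I.n = 2 ^ J.n := Nat.cast_injective h3
  exact Nat.pow_right_injective (by norm_num) h4

lemma eq_of_toSet_eq {I J : DyadicI} (h : I.toSet = J.toSet) : I = J := by
  have hn : I.n = J.n := n_eq_of_toSet_eq h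
  have hx : ((I.k : ℝ) / 2 ^ I.n) ∈ I.toSet := left_mem I
  have hx' : ((I.k : ℝ) / 2 ^ I.n) ∈ J.toSet := h ▸ hx
  have hb := nat_bounds (le_of_eq hn.symm) hx hx'
  rw [hn] at hb
  simp only [Nat.sub_self, pow_zero, mul_one] at hb
  have hk : I.k = J.k := by omega
  cases I; cases J
  simp_all

lemma eq_of_le_of_n_le {I J : DyadicI} (h : le I J) (hn : I.n ≤ J.n) : I = J := by
  have hx : ((J.k : ℝ) / 2 ^ J.n) ∈ J.toSet := left_mem J
  have hxI : ((I.k : ℝ) / 2 ^ I.n) ∈ I.toSet := left_mem I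
  have hxJ : ((I.k : ℝ) / 2 ^ I.n) ∈ J.toSet := h hxI
  obtain ⟨h1, h2⟩ := nat_bounds hn hxJ hxI
  have hsub : J.toSet ⊆ I.toSet := subset_of_nat hn h1 h2
  exact eq_of_toSet_eq (Set.Subset.antisymm h hsub)

lemma n_lt_of_le_ne {I J : DyadicI} (h : le I J) (hne : I ≠ J) : J.n < I.n := by
  by_contra h'
  push_neg at h'
  exact hne (eq_of_le_of_n_le h h')

lemma exists_max {S : Set DyadicI} : ∀ {I}, I ∈ S → ∃ M ∈ maxB S, le I M := by
  suffices h : ∀ n : ℕ, ∀ I ∈ S, I.n = n → ∃ M ∈ maxB S, le I M by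
    intro I hI; exact h I.n I hI rfl
  intro n
  induction n using Nat.strong_induction_on with
  | _ n ih =>
    intro I hI hn
    by_cases hmax : I ∈ maxB S
    · exact ⟨I, hmax, Set.Subset.refl _⟩
    · have : ∃ J ∈ S, le I J ∧ J ≠ I := by
        simp only [maxB, Set.mem_setOf_eq, not_and, not_forall] at hmax
        obtain ⟨J, hJ, hle, hne⟩ := hmax hI
        exact ⟨J, hJ, hle, hne⟩
      obtain ⟨J, hJ, hle, hne⟩ := this
      have hlt : J.n < n := hn ▸ n_lt_of_le_ne hle (Ne.symm hne)
      obtain ⟨M, hM, hleM⟩ := ih J.n hlt J hJ rfl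
      exact ⟨M, hM, Set.Subset.trans hle hleM⟩

lemma star_maxB (S : Set DyadicI) : star (maxB S) = star S := by
  apply le_antisymm
  · exact star_mono fun I hI => hI.1
  · apply measure_mono
    intro x hx
    simp only [Set.mem_iUnion, exists_prop] at hx ⊢
    obtain ⟨I, hI, hxI⟩ := hx
    obtain ⟨M, hM, hle⟩ := exists_max hI
    exact ⟨M, hM, hle hxI⟩

lemma maxB_antichain (S : Set DyadicI) :
    (maxB S).Pairwise (Function.onFun Disjoint toSet) := by
  intro I hI J hJ hne
  rw [Function.onFun, Set.disjoint_left]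
  intro x hxI hxJ
  rcases Nat.le_total I.n J.n with hn | hn
  · -- J has bigger or equal n; J.toSet ⊆ I.toSet
    obtain ⟨h1, h2⟩ := nat_bounds hn hxJ hxI
    have hsub : J.toSet ⊆ I.toSet := subset_of_nat hn h1 h2
    exact hne (hJ.2 I hI.1 hsub)
  · obtain ⟨h1, h2⟩ := nat_bounds hn hxI hxJ
    have hsub : I.toSet ⊆ J.toSet := subset_of_nat hn h1 h2
    exact hne (hI.2 J hJ.1 hsub).symm

lemma tsum_len_of_disjoint {S : Set DyadicI} (hdisj : S.Pairwise (Function.onFun Disjoint toSet)) :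
    ∑' I : S, len (I : DyadicI) = star S := by
  have : ∀ I : S, len (I : DyadicI) = volume (toSet (I : DyadicI)) :=
    fun I => (volume_toSet _).symm
  rw [tsum_congr this, star, ← measure_biUnion S.to_countable hdisj
    (fun I _ => measurableSet_Ico)]

lemma sum_indicator_le (A B' : Set DyadicI) (hdisj : A.Pairwise (Function.onFun Disjoint toSet)) :
    (∑' I : B', (if (I : DyadicI) ∈ A then (1 : ℝ≥0∞) else 0) * len (I : DyadicI))
      ≤ star B' := by
  set f : B' → Set ℝ := fun I => if (I : DyadicI) ∈ A then toSet (I : DyadicI) else ∅ with hf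
  have h1 : ∀ I : B', (if (I : DyadicI) ∈ A then (1 : ℝ≥0∞) else 0) * len (I : DyadicI)
      = volume (f I) := by
    intro I
    by_cases h : (I : DyadicI) ∈ A <;> simp [hf, h, volume_toSet]
  rw [tsum_congr h1]
  have hd : Pairwise (Function.onFun Disjoint f) := by
    intro I J hne
    rw [Function.onFun, hf]
    by_cases hIA : (I : DyadicI) ∈ A
    · by_cases hJA : (J : DyadicI) ∈ A
      · simp only [hIA, hJA, if_true]
        exact hdisj hIA hJA (fun h => hne (Subtype.coe_injective h))
      · simp [hIA, hJA]
    · simp [hIA]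
  have hm : ∀ I : B', MeasurableSet (f I) := by
    intro I
    by_cases h : (I : DyadicI) ∈ A <;> simp [hf, h, toSet, measurableSet_Ico]
  rw [← measure_iUnion hd hm]
  apply measure_mono
  apply Set.iUnion_subset
  intro I
  by_cases h : (I : DyadicI) ∈ A
  · simp only [hf, h, if_true]
    exact Set.subset_biUnion_of_mem I.2
  · simp [hf, h]

end DyadicI

/-- Remark 1: for a measure-preserving permutation, boundedness of
`T_π` on dyadic BMO with norm `C` forces the Semyonov constant to be at most `2C²`:
every collection `B` satisfies `|(π⁻¹ B)*| ≤ 2C² |B*|`. -/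
theorem semyonov_constant_le_of_bmo_bounded (π : Equiv.Perm DyadicI)
    (hlen : ∀ I, len (π I) = len I) (C : ℝ≥0∞)
    (hbdd : ∀ x : DyadicI → ℝ, bmoSq (fun I => x (π.symm I)) ≤ C ^ 2 * bmoSq x) :
    ∀ B : Set DyadicI, star (π.symm '' B) ≤ 2 * C ^ 2 * star B := by
  intro B
  set S : Set DyadicI := π.symm '' B with hS
  set A : Set DyadicI := maxB S with hA
  have hdisj : A.Pairwise (Function.onFun Disjoint toSet) := maxB_antichain S
  set x : DyadicI → ℝ := fun I => if I ∈ A then 1 else 0 with hx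
  -- upper bound on bmoSq x
  have hx1 : bmoSq x ≤ 1 := by
    apply iSup_le
    intro B'
    have hsum : (∑' I : B', ENNReal.ofReal (x I ^ 2) * len (I : DyadicI)) ≤ star B' := by
      have heq : ∀ I : B', ENNReal.ofReal (x I ^ 2) * len (I : DyadicI)
          = (if (I : DyadicI) ∈ A then (1 : ℝ≥0∞) else 0) * len (I : DyadicI) := by
        intro I
        by_cases h : (I : DyadicI) ∈ A <;> simp [hx, h]
      rw [tsum_congr heq]
      exact sum_indicator_le A B' hdisj
    calc (star B')⁻¹ * ∑' I : B', ENNReal.ofReal (x I ^ 2) * len (I : DyadicI)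
        ≤ (star B')⁻¹ * star B' := by gcongr
      _ ≤ 1 := ENNReal.inv_mul_le_one _
  -- lower bound
  have key : (star (π '' A))⁻¹ * star A ≤ bmoSq (fun I => x (π.symm I)) := by
    have hterm : ∀ I : ↥(π '' A),
        ENNReal.ofReal ((x (π.symm (I : DyadicI))) ^ 2) * len (I : DyadicI)
          = len (I : DyadicI) := by
      rintro ⟨I, a, ha, rfl⟩
      simp [hx, π.symm_apply_apply, ha]
    have hsum : (∑' I : ↥(π '' A), ENNReal.ofReal ((x (π.symm (I : DyadicI))) ^ 2)
        * len (I : DyadicI)) = star A := by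
      rw [tsum_congr hterm]
      rw [← Equiv.tsum_eq (Equiv.Set.image (⇑π) A π.injective)
        (fun I : ↥(π '' A) => len (I : DyadicI))]
      have : ∀ a : A, len ((Equiv.Set.image (⇑π) A π.injective a : DyadicI))
          = len (a : DyadicI) := by
        intro a
        simp [Equiv.Set.image_apply, hlen]
      rw [tsum_congr this]
      exact tsum_len_of_disjoint hdisj
    calc (star (π '' A))⁻¹ * star A
        = (star (π '' A))⁻¹ * ∑' I : ↥(π '' A),
            ENNReal.ofReal ((x (π.symm (I : DyadicI))) ^ 2) * len (I : DyadicI) := by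
          rw [hsum]
      _ ≤ bmoSq (fun I => x (π.symm I)) := by
          rw [bmoSq]
          exact le_iSup (fun B'' : Set DyadicI => (DyadicI.star B'')⁻¹ *
            ∑' I : B'', ENNReal.ofReal ((x (π.symm (I : DyadicI))) ^ 2) * len (I : DyadicI))
            (π '' A)
  have hC : (star (π '' A))⁻¹ * star A ≤ C ^ 2 := by
    calc (star (π '' A))⁻¹ * star A ≤ bmoSq (fun I => x (π.symm I)) := key
      _ ≤ C ^ 2 * bmoSq x := hbdd x
      _ ≤ C ^ 2 * 1 := by gcongr
      _ = C ^ 2 := mul_one _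
  have hstarA : star A ≤ C ^ 2 * star (π '' A) := by
    by_cases h0 : star (π '' A) = 0
    · have hempty : π '' A = ∅ := by
        by_contra hne
        obtain ⟨I, hI⟩ := Set.nonempty_iff_ne_empty.2 hne
        have := len_le_star hI
        rw [h0] at this
        exact len_ne_zero I (le_antisymm this (zero_le'))
      have hAempty : A = ∅ := by
        rwa [Set.image_eq_empty] at hempty
      rw [hAempty]
      have h5 : DyadicI.star (∅ : Set DyadicI) = 0 := by simp [DyadicI.star]
      rw [h5]
      exact zero_le'
    · have hne : star (π '' A) ≠ ⊤ := star_ne_top _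
      calc star A = star (π '' A) * ((star (π '' A))⁻¹ * star A) := by
            rw [← mul_assoc, ENNReal.mul_inv_cancel h0 hne, one_mul]
        _ ≤ star (π '' A) * C ^ 2 := by gcongr
        _ = C ^ 2 * star (π '' A) := mul_comm _ _
  have himg : π '' A ⊆ B := by
    intro I hI
    obtain ⟨a, ha, rfl⟩ := hI
    obtain ⟨b, hb, rfl⟩ := ha.1
    simpa using hb
  calc star (π.symm '' B) = star A := (star_maxB S).symm
    _ ≤ C ^ 2 * star (π '' A) := hstarA
    _ ≤ C ^ 2 * star B := by gcongr; exact star_mono himg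
    _ ≤ 2 * C ^ 2 * star B := by
        gcongr ?_ * _
        exact le_mul_of_one_le_left (zero_le') one_le_two
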